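/- Let H be an n×n symmetric positive definite matrix, let G ∈ 𝒢_H, and let X = (X_t)_{t∈ℤ} satisfy e^{tH} X_t → 0 in probability as t → −∞ and Δ_t X = (e^{−H} − I) X_{t−1} + Δ_t G for all t ∈ ℤ. Then for every t ∈ ℤ, X_t = e^{−tH} · lim_{l→−∞} Σ_{k=l}^t e^{kH} Δ_k G, where the limit is taken in probability. -/

import Mathlib

set_option autoImplicit false

open MeasureTheory Filter Finset Matrix Topology

variable {Ω : Type*}

/-- Two `ℤ`-indexed `ℝⁿ`-valued processes have the same finite-dimensional
distributions. -/
def SameFDD {n : ℕ} [MeasurableSpace Ω] (μ : Measure Ω)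
    (X Y : ℤ → Ω → (Fin n → ℝ)) : Prop :=
  ∀ (m : ℕ) (t : Fin m → ℤ),
    μ.map (fun ω (i : Fin m) => X (t i) ω) = μ.map (fun ω (i : Fin m) => Y (t i) ω)

/-- Strict stationarity of a `ℤ`-indexed process. -/
def IsStationaryProcess {n : ℕ} [MeasurableSpace Ω] (μ : Measure Ω)
    (X : ℤ → Ω → (Fin n → ℝ)) : Prop :=
  ∀ s : ℤ, SameFDD μ (fun t => X (t + s)) X

/-- Stationarity of increments of a `ℤ`-indexed process. -/
def HasStationaryIncrements {n : ℕ} [MeasurableSpace Ω] (μ : Measure Ω)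
    (G : ℤ → Ω → (Fin n → ℝ)) : Prop :=
  ∀ s : ℤ, SameFDD μ (fun t ω => G (t + s) ω - G s ω) (fun t ω => G t ω - G 0 ω)

/-- The matrix exponential `e^{tH}` for an integer `t`. -/
noncomputable def zexp {n : ℕ} (H : Matrix (Fin n) (Fin n) ℝ) (t : ℤ) :
    Matrix (Fin n) (Fin n) ℝ :=
  NormedSpace.exp ((t : ℝ) • H)

/-- The partial sum `Σ_{k=l}^0 e^{kH} Δ_k G`. -/
noncomputable def partialSumG {n : ℕ} (H : Matrix (Fin n) (Fin n) ℝ)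
    (G : ℤ → Ω → (Fin n → ℝ)) (l : ℤ) (ω : Ω) : Fin n → ℝ :=
  ∑ k ∈ Finset.Icc l 0, (zexp H k).mulVec (G k ω - G (k - 1) ω)

/-- `G ∈ 𝒢_H` : `G` is a stationary-increment process starting from `0` whose partial
sums `Σ_{k=l}^0 e^{kH} Δ_k G` converge in probability as `l → −∞`. -/
def MemG {n : ℕ} [MeasurableSpace Ω] (μ : Measure Ω) (H : Matrix (Fin n) (Fin n) ℝ)
    (G : ℤ → Ω → (Fin n → ℝ)) : Prop :=
  (∀ ω, G 0 ω = 0) ∧ HasStationaryIncrements μ G ∧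
    ∃ ξ : Ω → (Fin n → ℝ), TendstoInMeasure μ (fun l => partialSumG H G l) Filter.atBot ξ

/-!
Multiplying the recursion by `e^{tH}` turns it into
`e^{tH} Δ_t G = e^{tH} X_t - e^{(t-1)H} X_{t-1}`, so `Σ_{k=l}^t e^{kH} Δ_k G` telescopes to
`e^{tH} X_t - e^{(l-1)H} X_{l-1}`. After multiplying by `e^{-tH}`, the boundary term is a fixed
linear image of `e^{(l-1)H} X_{l-1}`, which tends to `0` in probability as `l → −∞`.
-/

open scoped NNReal

theorem Finset.sum_Icc_sub_pred {M : Type*} [AddCommGroup M] (f : ℤ → M) {l t : ℤ}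
    (hlt : l ≤ t) : ∑ k ∈ Icc l t, (f k - f (k - 1)) = f t - f (l - 1) := by
  induction t, hlt using Int.leInduction with
  | base => simp
  | succ t hlt ih =>
    rw [← insert_Icc_right_eq_Icc_add_one (by omega), sum_insert (by simp), ih,
      add_sub_cancel_right]
    abel

namespace MeasureTheory.TendstoInMeasure

variable {α ι : Type*} [MeasurableSpace α] {μ : Measure α} {l : Filter ι}

theorem comp_lipschitzWith {E F : Type*} [PseudoEMetricSpace E] [PseudoEMetricSpace F]
    {f : ι → α → E} {g : α → E} {K : ℝ≥0} {φ : E → F} (hφ : LipschitzWith K φ)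
    (h : TendstoInMeasure μ f l g) :
    TendstoInMeasure μ (fun i x => φ (f i x)) l (fun x => φ (g x)) := by
  intro ε hε
  have hK : ((K : ENNReal) + 1) ≠ ⊤ := by simp
  refine tendsto_of_tendsto_of_tendsto_of_le_of_le tendsto_const_nhds
    (h _ (ENNReal.div_pos hε.ne' hK)) (fun _ => zero_le) (fun i => measure_mono ?_)
  intro x (hx : ε ≤ edist (φ (f i x)) (φ (g x)))
  refine ENNReal.div_le_of_le_mul ?_
  calc ε ≤ K * edist (f i x) (g x) := hx.trans (hφ.edist_le_mul _ _)
    _ ≤ edist (f i x) (g x) * (K + 1) := by rw [mul_comm]; gcongr; exact le_self_add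

theorem mulVec {n : ℕ} (A : Matrix (Fin n) (Fin n) ℝ) {f : ι → α → Fin n → ℝ}
    {g : α → Fin n → ℝ} (h : TendstoInMeasure μ f l g) :
    TendstoInMeasure μ (fun i x => A *ᵥ f i x) l (fun x => A *ᵥ g x) :=
  h.comp_lipschitzWith (Matrix.mulVecLin A).toContinuousLinearMap.lipschitz

theorem sub_of_tendsto_zero {E : Type*} [SeminormedAddCommGroup E] {f : ι → α → E}
    (h : TendstoInMeasure μ f l (fun _ => 0)) (g : α → E) :
    TendstoInMeasure μ (fun i x => g x - f i x) l g := by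
  intro ε hε
  simpa [edist_eq_enorm_sub] using h ε hε

end MeasureTheory.TendstoInMeasure

section zexp

variable {n : ℕ} (H : Matrix (Fin n) (Fin n) ℝ)

theorem zexp_add (a b : ℤ) : zexp H (a + b) = zexp H a * zexp H b := by
  have hcomm : Commute ((a : ℝ) • H) ((b : ℝ) • H) := ((Commute.refl H).smul_left _).smul_right _
  rw [zexp, zexp, zexp, ← Matrix.exp_add_of_commute _ _ hcomm, Int.cast_add, add_smul]

theorem zexp_zero : zexp H 0 = 1 := by
  simp [zexp]

theorem zexp_neg_one : zexp H (-1) = NormedSpace.exp (-H) := by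
  simp [zexp]

theorem zexp_neg_mul_self (t : ℤ) : zexp H (-t) * zexp H t = 1 := by
  rw [← zexp_add, neg_add_cancel, zexp_zero]

theorem zexp_mulVec_eq_sub_of_recursion {x x' g : Fin n → ℝ} (t : ℤ)
    (hrec : x - x' = (NormedSpace.exp (-H) - 1) *ᵥ x' + g) :
    zexp H t *ᵥ g = zexp H t *ᵥ x - zexp H (t - 1) *ᵥ x' := by
  have hg : g = x - NormedSpace.exp (-H) *ᵥ x' := by
    rw [sub_mulVec, one_mulVec] at hrec
    rw [eq_sub_of_add_eq' hrec.symm]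
    abel
  rw [hg, mulVec_sub, mulVec_mulVec, ← zexp_neg_one, ← zexp_add, ← sub_eq_add_neg]

end zexp

theorem stmt6_general {n : ℕ} [MeasurableSpace Ω] (μ : Measure Ω)
    (H : Matrix (Fin n) (Fin n) ℝ)
    (X G : ℤ → Ω → (Fin n → ℝ))
    (hlim : TendstoInMeasure μ (fun t ω => (zexp H t).mulVec (X t ω)) Filter.atBot
      (fun _ => (0 : Fin n → ℝ)))
    (heq : ∀ (t : ℤ) (ω : Ω), X t ω - X (t - 1) ω =
      (NormedSpace.exp (-H) - 1).mulVec (X (t - 1) ω) + (G t ω - G (t - 1) ω)) :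
    ∀ t : ℤ, TendstoInMeasure μ
      (fun l ω => (zexp H (-t)).mulVec
        (∑ k ∈ Finset.Icc l t, (zexp H k).mulVec (G k ω - G (k - 1) ω)))
      Filter.atBot (X t) := by
  intro t
  have hsum : ∀ l ≤ t, ∀ ω, zexp H (-t) *ᵥ ∑ k ∈ Icc l t, zexp H k *ᵥ (G k ω - G (k - 1) ω) =
      X t ω - zexp H (-t) *ᵥ (zexp H (l - 1) *ᵥ X (l - 1) ω) := by
    intro l hl ω
    simp_rw [zexp_mulVec_eq_sub_of_recursion H _ (heq _ ω)]
    rw [sum_Icc_sub_pred (fun k => zexp H k *ᵥ X k ω) hl, mulVec_sub, mulVec_mulVec,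
      zexp_neg_mul_self, one_mulVec]
  have hboundary : TendstoInMeasure μ
      (fun l ω => zexp H (-t) *ᵥ (zexp H (l - 1) *ᵥ X (l - 1) ω)) atBot (fun _ => 0) := by
    have hshift := hlim.comp (tendsto_atBot_add_const_right _ (-1) tendsto_id)
    simpa [sub_eq_add_neg] using hshift.mulVec (zexp H (-t))
  refine (hboundary.sub_of_tendsto_zero (X t)).congr' ?_ EventuallyEq.rfl
  filter_upwards [eventually_le_atBot t] with l hl
  exact Eventually.of_forall fun ω => (hsum l hl ω).symm

/-- if `e^{tH} X_t → 0` in probability as `t → −∞` and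
`Δ_t X = (e^{−H} − I) X_{t−1} + Δ_t G` with `G ∈ 𝒢_H`, then for every `t ∈ ℤ`,
`X_t = e^{−tH} · lim_{l→−∞} Σ_{k=l}^t e^{kH} Δ_k G`, the limit being in
probability. -/
theorem stmt6 {n : ℕ} [MeasurableSpace Ω] (μ : Measure Ω) [IsProbabilityMeasure μ]
    (H : Matrix (Fin n) (Fin n) ℝ) (hH : H.PosDef)
    (X G : ℤ → Ω → (Fin n → ℝ))
    (hmX : ∀ t, Measurable (X t)) (hmG : ∀ t, Measurable (G t))
    (hG : MemG μ H G)
    (hlim : TendstoInMeasure μ (fun t ω => (zexp H t).mulVec (X t ω)) Filter.atBot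
      (fun _ => (0 : Fin n → ℝ)))
    (heq : ∀ (t : ℤ) (ω : Ω), X t ω - X (t - 1) ω =
      (NormedSpace.exp (-H) - 1).mulVec (X (t - 1) ω) + (G t ω - G (t - 1) ω)) :
    ∀ t : ℤ, TendstoInMeasure μ
      (fun l ω => (zexp H (-t)).mulVec
        (∑ k ∈ Finset.Icc l t, (zexp H k).mulVec (G k ω - G (k - 1) ω)))
      Filter.atBot (X t) :=
  stmt6_general μ H X G hlim heq
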